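/- Existence of the m-point Gauss quadrature formula: for every integer m ≥ 1 and all real numbers a < b, there exist m pairwise distinct nodes x₁, …, x_m in the open interval (a,b) and strictly positive weights w₁, …, w_m such that the quadrature rule (x_μ, w_μ)_{μ=1}^m on [a,b] is exact of degree 2m − 1, i.e., ∑_{μ=1}^m w_μ q(x_μ) = ∫_a^b q(t) dt for every real polynomial q of degree at most 2m − 1. -/

import Mathlib

/-!
Let `P` be the monic polynomial of degree `m` orthogonal to all polynomials of degree `< m` for
the inner product `⟨p, q⟩ = ∫_a^b p q`. If `P` had fewer than `m` roots of odd multiplicity in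
`(a, b)`, multiplying `P` by the product `g` of the corresponding linear factors would give a
polynomial of constant sign on `(a, b)`, contradicting `∫_a^b P g = 0`. So `P` has `m` distinct
roots in `(a, b)`; take them as nodes and the integrals of the Lagrange basis polynomials as
weights. Dividing `q` by `P` reduces exactness in degree `< 2m` to exactness in degree `< m`, and
applying exactness to the squares of the Lagrange basis polynomials shows that the weights are
positive.
-/

open intervalIntegral Polynomial Set Finset

theorem IsPreconnected.mul_pos_of_forall_ne_zero {X : Type*} [TopologicalSpace X] {s : Set X}
    (hs : IsPreconnected s) {f : X → ℝ} (hf : ContinuousOn f s) (hf0 : ∀ x ∈ s, f x ≠ 0)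
    {x y : X} (hx : x ∈ s) (hy : y ∈ s) : 0 < f x * f y := by
  by_contra! h
  rcases mul_nonpos_iff.1 h with ⟨hfx, hfy⟩ | ⟨hfx, hfy⟩
  · obtain ⟨z, hz, hz0⟩ := hs.intermediate_value hy hx hf ⟨hfy, hfx⟩
    exact hf0 z hz hz0
  · obtain ⟨z, hz, hz0⟩ := hs.intermediate_value hx hy hf ⟨hfx, hfy⟩
    exact hf0 z hz hz0

theorem Polynomial.exists_eq_sq_mul_of_even_count_roots {R : Type*} [CommRing R] [IsDomain R]
    [DecidableEq R] {f : R[X]} (hf : f ≠ 0) {s : Set R}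
    (hs : ∀ r ∈ s, Even (f.roots.count r)) :
    ∃ g u : R[X], f = g ^ 2 * u ∧ ∀ r ∈ s, ¬ u.IsRoot r := by
  classical
  set M := f.roots.filter (· ∈ s)
  have hcount : ∀ r ∈ s, M.count r = f.roots.count r := fun r hr =>
    Multiset.count_filter_of_pos hr
  obtain ⟨T, hT⟩ := M.exists_smul_of_dvd_count (k := 2) fun r hr =>
    (hcount r (Multiset.mem_filter.1 hr).2 ▸ hs r (Multiset.mem_filter.1 hr).2).two_dvd
  obtain ⟨u, hu⟩ := (Multiset.prod_X_sub_C_dvd_iff_le_roots hf M).2 (Multiset.filter_le _ _)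
  refine ⟨(T.map (X - C ·)).prod, u, ?_, ?_⟩
  · rw [hu, hT, Multiset.map_nsmul, Multiset.prod_nsmul]
  · intro r hr hroot
    have hu0 : u ≠ 0 := right_ne_zero_of_mul (hu ▸ hf)
    have h := congrArg (Multiset.count r) (congrArg roots hu)
    rw [roots_mul (hu ▸ hf), roots_multiset_prod_X_sub_C, Multiset.count_add, hcount r hr] at h
    have : 0 < u.roots.count r := Multiset.count_pos.2 ((mem_roots hu0).2 hroot)
    omega

theorem exists_monic_orthogonal {F : Type*} [Field F] [LinearOrder F] [IsStrictOrderedRing F]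
    (L : F[X] →ₗ[F] F) (hL : ∀ p : F[X], p ≠ 0 → 0 < L (p ^ 2)) (n : ℕ) :
    ∃ P : F[X], P.Monic ∧ P.natDegree = n ∧ ∀ q : F[X], q.degree < n → L (P * q) = 0 := by
  -- `P ↦ (q ↦ L (P * q))`, from degree `≤ n` to the dual of degree `< n`
  set φ := ((LinearMap.mul F F[X]).compr₂ L).compl₁₂ (degreeLT F (n + 1)).subtype
    (degreeLT F n).subtype
  have hφ : LinearMap.ker φ ≠ ⊥ := LinearMap.ker_ne_bot_of_finrank_lt <| by
    simp [Subspace.dual_finrank_eq, (degreeLTEquiv F _).finrank_eq]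
  obtain ⟨⟨P, hPdeg⟩, hPker, hP0⟩ := (Submodule.ne_bot_iff _).1 hφ
  replace hP0 : P ≠ 0 := by simpa using hP0
  have horth : ∀ q : F[X], q.degree < n → L (P * q) = 0 := fun q hq =>
    LinearMap.congr_fun (LinearMap.mem_ker.1 hPker) ⟨q, mem_degreeLT.2 hq⟩
  have hPn : P.natDegree = n := by
    have hle : P.natDegree ≤ n := by
      have := (natDegree_lt_iff_degree_lt hP0).2 (mem_degreeLT.1 hPdeg)
      omega
    refine hle.antisymm (not_lt.1 fun hlt => (hL P hP0).ne' ?_)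
    rw [sq]
    exact horth P ((natDegree_lt_iff_degree_lt hP0).1 hlt)
  have hc : P.leadingCoeff⁻¹ ≠ 0 := inv_ne_zero (leadingCoeff_ne_zero.2 hP0)
  refine ⟨P * C P.leadingCoeff⁻¹, monic_mul_leadingCoeff_inv hP0, ?_, fun q hq => ?_⟩
  · rwa [natDegree_mul_C hc]
  · rw [mul_assoc]
    exact horth _ ((degree_C_mul hc).trans_lt hq)

section Quadrature

variable {F ι : Type*} [Field F] [Fintype ι] [DecidableEq ι]
  (L : F[X] →ₗ[F] F) (x : ι → F)

noncomputable def interpolatoryWeights (i : ι) : F :=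
  L (Lagrange.basis univ x i)

variable {L x}

theorem apply_eq_sum_interpolatoryWeights (hx : Function.Injective x) {r : F[X]}
    (hr : r.degree < Fintype.card ι) :
    L r = ∑ i, interpolatoryWeights L x i * r.eval (x i) := by
  conv_lhs => rw [Lagrange.eq_interpolate (f := r) hx.injOn (by rwa [card_univ])]
  rw [Lagrange.interpolate_apply, map_sum]
  refine Finset.sum_congr rfl fun i _ => ?_
  rw [← smul_eq_C_mul, map_smul, smul_eq_mul, mul_comm, interpolatoryWeights]

theorem apply_eq_sum_interpolatoryWeights_of_orthogonal (hx : Function.Injective x) {P : F[X]}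
    (hP : P.Monic) (hPdeg : P.natDegree = Fintype.card ι) (hroots : ∀ i, P.IsRoot (x i))
    (horth : ∀ q : F[X], q.degree < Fintype.card ι → L (P * q) = 0) {q : F[X]}
    (hq : q.natDegree < 2 * Fintype.card ι) :
    L q = ∑ i, interpolatoryWeights L x i * q.eval (x i) := by
  have hdecomp : q %ₘ P + P * (q /ₘ P) = q := modByMonic_add_div q P
  have hrem : (q %ₘ P).degree < Fintype.card ι := by
    simpa [degree_eq_natDegree hP.ne_zero, hPdeg] using degree_modByMonic_lt q hP
  have hquot : (q /ₘ P).degree < Fintype.card ι := by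
    have : (q /ₘ P).natDegree < Fintype.card ι := by
      rw [natDegree_divByMonic q hP, hPdeg]
      omega
    exact degree_le_natDegree.trans_lt (by exact_mod_cast this)
  have hnodes : ∀ i, (q %ₘ P).eval (x i) = q.eval (x i) := fun i => by
    conv_rhs => rw [← hdecomp, eval_add, eval_mul, (hroots i).eq_zero, zero_mul, add_zero]
  calc L q = L (q %ₘ P + P * (q /ₘ P)) := by rw [hdecomp]
    _ = L (q %ₘ P) := by rw [map_add, horth _ hquot, add_zero]
    _ = ∑ i, interpolatoryWeights L x i * q.eval (x i) := by
      simp only [apply_eq_sum_interpolatoryWeights hx hrem, hnodes]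

theorem interpolatoryWeights_pos [LinearOrder F] [IsStrictOrderedRing F]
    (hx : Function.Injective x) (hL : ∀ p : F[X], p ≠ 0 → 0 < L (p ^ 2))
    (hexact : ∀ q : F[X], q.natDegree < 2 * Fintype.card ι →
      L q = ∑ i, interpolatoryWeights L x i * q.eval (x i)) (i : ι) :
    0 < interpolatoryWeights L x i := by
  set ℓ := Lagrange.basis univ x i
  have hdeg : (ℓ ^ 2).natDegree < 2 * Fintype.card ι := by
    rw [natDegree_pow, Lagrange.natDegree_basis hx.injOn (mem_univ i), card_univ]
    have := Fintype.card_pos_iff.2 ⟨i⟩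
    omega
  have hweight : L (ℓ ^ 2) = interpolatoryWeights L x i := by
    rw [hexact _ hdeg, Finset.sum_eq_single i]
    · rw [eval_pow, Lagrange.eval_basis_self hx.injOn (mem_univ i), one_pow, mul_one]
    · intro j _ hji
      rw [eval_pow, Lagrange.eval_basis_of_ne hji.symm (mem_univ j), zero_pow two_ne_zero,
        mul_zero]
    · simp
  exact hweight ▸ hL ℓ (Lagrange.basis_ne_zero hx.injOn (mem_univ i))

end Quadrature

namespace Polynomial

variable {a b : ℝ}

noncomputable def intervalIntegralₗ (a b : ℝ) : ℝ[X] →ₗ[ℝ] ℝ where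
  toFun p := ∫ t in a..b, p.eval t
  map_add' p q := by
    simp only [eval_add]
    exact integral_add (p.continuous.intervalIntegrable a b) (q.continuous.intervalIntegrable a b)
  map_smul' c p := by
    simp only [eval_smul, smul_eq_mul, RingHom.id_apply, integral_const_mul]

theorem integral_eval_pos (hab : a < b) {p : ℝ[X]} (hp : p ≠ 0)
    (hnonneg : ∀ t ∈ Ioo a b, 0 ≤ p.eval t) : 0 < ∫ t in a..b, p.eval t := by
  have hIcc : Icc a b ⊆ {t | 0 ≤ p.eval t} := by
    rw [← closure_Ioo hab.ne]
    exact closure_minimal hnonneg (isClosed_le continuous_const p.continuous)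
  obtain ⟨c, hc, hc0⟩ : ∃ c ∈ Icc a b, p.eval c ≠ 0 := by
    by_contra! h
    exact hp (p.eq_zero_of_infinite_isRoot ((Icc_infinite hab).mono h))
  exact integral_pos hab p.continuous.continuousOn (fun t ht => hIcc (Ioc_subset_Icc_self ht))
    ⟨c, hc, (hIcc hc).lt_of_ne' hc0⟩

theorem integral_eval_sq_pos (hab : a < b) {p : ℝ[X]} (hp : p ≠ 0) :
    0 < ∫ t in a..b, (p ^ 2).eval t :=
  integral_eval_pos hab (pow_ne_zero 2 hp) fun t _ => by simpa using sq_nonneg (p.eval t)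

theorem integral_eval_ne_zero_of_even_count_roots (hab : a < b) {f : ℝ[X]} (hf : f ≠ 0)
    (hs : ∀ r ∈ Ioo a b, Even (f.roots.count r)) : ∫ t in a..b, f.eval t ≠ 0 := by
  obtain ⟨g, u, rfl, hu⟩ := exists_eq_sq_mul_of_even_count_roots hf hs
  have hc : (a + b) / 2 ∈ Ioo a b := ⟨by linarith, by linarith⟩
  have hsign : ∀ t ∈ Ioo a b, 0 ≤ (C (u.eval ((a + b) / 2)) * (g ^ 2 * u)).eval t :=
    fun t ht => by
      have := isPreconnected_Ioo.mul_pos_of_forall_ne_zero u.continuous.continuousOn hu hc ht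
      simp only [eval_mul, eval_C, eval_pow]
      nlinarith [sq_nonneg (g.eval t)]
  have hpos := integral_eval_pos hab (mul_ne_zero (C_ne_zero.2 (hu _ hc)) hf) hsign
  simp only [eval_C_mul, integral_const_mul] at hpos
  exact right_ne_zero_of_mul hpos.ne'

theorem exists_roots_Ioo_of_integral_mul_eq_zero (hab : a < b) {P : ℝ[X]} (hP : P ≠ 0) {n : ℕ}
    (horth : ∀ q : ℝ[X], q.degree < n → ∫ t in a..b, (P * q).eval t = 0) :
    ∃ S : Finset ℝ, S.card = n ∧ ∀ r ∈ S, r ∈ Ioo a b ∧ P.IsRoot r := by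
  classical
  set S := P.roots.toFinset.filter fun r => r ∈ Ioo a b ∧ Odd (P.roots.count r)
  suffices hn : n ≤ S.card by
    obtain ⟨T, hTS, hT⟩ := Finset.exists_subset_card_eq hn
    refine ⟨T, hT, fun r hr => ?_⟩
    obtain ⟨hroot, hIoo, -⟩ := Finset.mem_filter.1 (hTS hr)
    exact ⟨hIoo, (mem_roots hP).1 (Multiset.mem_toFinset.1 hroot)⟩
  by_contra! hlt
  set g := (S.val.map (X - C ·)).prod
  have hg : g.Monic := monic_multiset_prod_of_monic _ _ fun r _ => monic_X_sub_C r
  have hPg : P * g ≠ 0 := mul_ne_zero hP hg.ne_zero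
  have hgdeg : g.degree < n := by
    rw [degree_eq_natDegree hg.ne_zero, natDegree_multiset_prod_X_sub_C_eq_card]
    exact_mod_cast hlt
  refine integral_eval_ne_zero_of_even_count_roots hab hPg (fun r hr => ?_) (horth g hgdeg)
  rw [roots_mul hPg, roots_multiset_prod_X_sub_C, Multiset.count_add]
  by_cases hrS : r ∈ S
  · rw [Multiset.count_eq_one_of_mem S.nodup hrS]
    exact (Finset.mem_filter.1 hrS).2.2.add_one
  · rw [Multiset.count_eq_zero.2 hrS, add_zero, ← Nat.not_odd_iff_even]
    intro hodd
    exact hrS (Finset.mem_filter.2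
      ⟨Multiset.mem_toFinset.2 (Multiset.count_pos.1 hodd.pos), hr, hodd⟩)

end Polynomial

/-- Existence of the m-point Gauss quadrature formula: for every `m ≥ 1` and
`a < b`, there are `m` pairwise distinct nodes in `(a,b)` and strictly
positive weights such that the quadrature rule is exact of degree `2m − 1`. -/
theorem exists_gauss_quadrature (m : ℕ) (hm : 1 ≤ m) (a b : ℝ) (hab : a < b) :
    ∃ (x : Fin m → ℝ) (w : Fin m → ℝ),
      Function.Injective x ∧
      (∀ μ, x μ ∈ Set.Ioo a b) ∧
      (∀ μ, 0 < w μ) ∧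
      (∀ q : Polynomial ℝ, q.natDegree ≤ 2 * m - 1 →
        ∑ μ, w μ * q.eval (x μ) = ∫ t in a..b, q.eval t) := by
  set L := intervalIntegralₗ a b
  have hL : ∀ p : ℝ[X], p ≠ 0 → 0 < L (p ^ 2) := fun p hp => integral_eval_sq_pos hab hp
  obtain ⟨P, hPmonic, hPdeg, horth⟩ := exists_monic_orthogonal L hL m
  obtain ⟨S, hS, hSroots⟩ := exists_roots_Ioo_of_integral_mul_eq_zero hab hPmonic.ne_zero horth
  set x := S.orderEmbOfFin hS
  have hx : ∀ μ, x μ ∈ Ioo a b ∧ P.IsRoot (x μ) := fun μ =>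
    hSroots _ (S.orderEmbOfFin_mem hS μ)
  have hexact : ∀ q : ℝ[X], q.natDegree < 2 * Fintype.card (Fin m) →
      L q = ∑ μ, interpolatoryWeights L x μ * q.eval (x μ) := fun q =>
    apply_eq_sum_interpolatoryWeights_of_orthogonal x.injective hPmonic
      (by rw [hPdeg, Fintype.card_fin]) (fun μ => (hx μ).2) (by simpa using horth)
  refine ⟨x, interpolatoryWeights L x, x.injective, fun μ => (hx μ).1,
    interpolatoryWeights_pos x.injective hL hexact, fun q hq => (hexact q ?_).symm⟩
  rw [Fintype.card_fin]
  omega
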